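/- arXiv:math/0404015 — 3 statements merged into one kernel-verified Lean document; each statement's English description precedes it below -/
import Mathlib

section
/- Let m(x,t) = e^{nt}·((1−e^{−2t})/2)^{|x|}·((1+e^{−2t})/2)^{n−|x|} for x ∈ {0,1}^n and t ≥ 0, where |x| is the number of ones in x. Then m satisfies the differential equation d/dt m(x,t) = Σ_{y: d(x,y)=1} m(y,t) with initial condition m(x,0) = 1 if x = 0̂ and 0 otherwise. -/
/-!
On each coordinate the mean factors: `e^t (1 - e^{-2t}) / 2 = sinh t` and
`e^t (1 + e^{-2t}) / 2 = cosh t`, so `m(x, t)` is the product over the coordinates of `sinh t`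
(where `x` has a one) and `cosh t` (where it has a zero). Since `sinh' = cosh` and `cosh' = sinh`,
the product rule differentiates one coordinate at a time, and differentiating coordinate `i`
yields exactly the product attached to the neighbour of `x` obtained by flipping bit `i`.
-/

/-- Hamming weight of a vertex of the `n`-cube. -/
def cubeWeight {n : ℕ} (x : Fin n → Bool) : ℕ :=
  (Finset.univ.filter fun i => x i = true).card

/-- Hamming distance on the `n`-cube. -/
def cubeDist {n : ℕ} (x y : Fin n → Bool) : ℕ :=
  (Finset.univ.filter fun i => x i ≠ y i).card

/-- Expected particle count in the branching translation process. -/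
noncomputable def btpMean (n : ℕ) (x : Fin n → Bool) (t : ℝ) : ℝ :=
  Real.exp (n * t) * ((1 - Real.exp (-2 * t)) / 2) ^ cubeWeight x *
    ((1 + Real.exp (-2 * t)) / 2) ^ (n - cubeWeight x)

open Finset Function Real

noncomputable def cubeFactor (b : Bool) (t : ℝ) : ℝ := if b then sinh t else cosh t

theorem hasDerivAt_cubeFactor (b : Bool) (t : ℝ) :
    HasDerivAt (cubeFactor b) (cubeFactor (!b) t) t := by
  cases b
  exacts [hasDerivAt_cosh t, hasDerivAt_sinh t]

theorem btpMean_eq_prod (n : ℕ) (x : Fin n → Bool) (t : ℝ) :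
    btpMean n x t = ∏ i, cubeFactor (x i) t := by
  have hsinh : sinh t = exp t * ((1 - exp (-2 * t)) / 2) := by
    rw [sinh_eq, mul_div_assoc', mul_sub, mul_one, ← exp_add]; ring_nf
  have hcosh : cosh t = exp t * ((1 + exp (-2 * t)) / 2) := by
    rw [cosh_eq, mul_div_assoc', mul_add, mul_one, ← exp_add]; ring_nf
  have hweight : cubeWeight x ≤ n := by
    simpa [cubeWeight] using card_filter_le univ fun i => x i = true
  have hcard : #{i | ¬ x i = true} = n - cubeWeight x := by
    have := card_filter_add_card_filter_not (s := univ) (fun i => x i = true)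
    rw [card_univ, Fintype.card_fin] at this
    unfold cubeWeight; omega
  simp only [cubeFactor, prod_ite, prod_const, hcard]
  rw [btpMean, ← cubeWeight, hsinh, hcosh, mul_pow, mul_pow, mul_mul_mul_comm, ← pow_add,
    Nat.add_sub_cancel' hweight, exp_nat_mul, mul_assoc]

theorem btpMean_zero (n : ℕ) (x : Fin n → Bool) :
    btpMean n x 0 = if x = (fun _ => false) then 1 else 0 := by
  have hfactor (b : Bool) : cubeFactor b 0 = if b = false then 1 else 0 := by
    cases b <;> simp [cubeFactor]
  simp [btpMean_eq_prod, hfactor, Fintype.prod_boole, funext_iff]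

theorem hasDerivAt_prod_update {𝕜 𝔸 ι α : Type*} [NontriviallyNormedField 𝕜] [NormedCommRing 𝔸]
    [NormedAlgebra 𝕜 𝔸] [Fintype ι] [DecidableEq ι] {g : α → 𝕜 → 𝔸} {σ : α → α} {t : 𝕜}
    (hg : ∀ a, HasDerivAt (g a) (g (σ a) t) t) (x : ι → α) :
    HasDerivAt (fun s => ∏ i, g (x i) s) (∑ i, ∏ j, g (update x i (σ (x i)) j) t) t := by
  convert HasDerivAt.fun_finsetProd (u := univ) fun i _ => hg (x i) using 2 with i
  rw [← mul_prod_erase univ _ (mem_univ i), update_self, smul_eq_mul, mul_comm]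
  congr 1
  exact prod_congr rfl fun j hj => by rw [update_of_ne (ne_of_mem_erase hj)]

theorem cubeDist_eq_one_iff {n : ℕ} {x y : Fin n → Bool} :
    cubeDist x y = 1 ↔ ∃ i, y = update x i (!x i) := by
  have hflip (a b : Bool) : a ≠ b ↔ b = !a := by cases a <;> cases b <;> decide
  simp only [cubeDist, card_eq_one, eq_singleton_iff_unique_mem, mem_filter, mem_univ, true_and,
    funext_iff, update_apply, hflip]
  refine exists_congr fun i => ⟨fun ⟨hi, h⟩ j => ?_, fun h => ⟨by simpa using h i, fun j hj => ?_⟩⟩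
  · split_ifs with hji
    · exact hji ▸ hi
    · by_contra hne
      exact hji (h j ((hflip _ _).1 (Ne.symm hne)))
  · by_contra hji
    rw [h j, if_neg hji] at hj
    simp at hj

theorem sum_cubeDist_eq_one {M : Type*} [AddCommMonoid M] {n : ℕ} (x : Fin n → Bool)
    (f : (Fin n → Bool) → M) :
    ∑ y ∈ univ.filter (fun y => cubeDist x y = 1), f y = ∑ i, f (update x i (!x i)) := by
  have hflip_injective : Injective fun i => update x i (!x i) := fun i j hij => by
    by_contra hne
    simpa [update_of_ne hne] using congrFun hij i
  have hneighbours :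
      univ.filter (fun y => cubeDist x y = 1) = univ.image fun i => update x i (!x i) := by
    ext y
    simp [cubeDist_eq_one_iff, eq_comm]
  rw [hneighbours, sum_image hflip_injective.injOn]

theorem btpMean_solves_ode_general (n : ℕ) (x : Fin n → Bool) (t : ℝ) :
    HasDerivAt (btpMean n x)
      (∑ y ∈ Finset.univ.filter (fun y => cubeDist x y = 1), btpMean n y t) t ∧
    btpMean n x 0 = if x = (fun _ => false) then 1 else 0 := by
  have hmean : btpMean n = fun y s => ∏ i, cubeFactor (y i) s := by
    ext y s
    exact btpMean_eq_prod n y s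
  refine ⟨?_, btpMean_zero n x⟩
  rw [sum_cubeDist_eq_one, hmean]
  exact hasDerivAt_prod_update (fun b => hasDerivAt_cubeFactor b t) x

theorem btpMean_solves_ode (n : ℕ) (x : Fin n → Bool) (t : ℝ) (ht : 0 ≤ t) :
    HasDerivAt (btpMean n x)
      (∑ y ∈ Finset.univ.filter (fun y => cubeDist x y = 1), btpMean n y t) t ∧
    btpMean n x 0 = if x = (fun _ => false) then 1 else 0 :=
  btpMean_solves_ode_general n x t
end

section
/- Let Z have density f on [0,∞) with f(0) = 1 and |f(x) − 1| ≤ K·x for all x ≥ 0, and let Y be exponential with mean 1. Let T_n be the sum of n i.i.d. copies of Z and S_n the sum of n i.i.d. copies of Y. Then for 0 < u ≤ 1, P(T_n ≤ u) ≤ e^{(1+K)u}·P(S_n ≤ u). -/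
/-!
With respect to the exponential law, `Z i` has density `f x * e^x`, which is at most
`e^{(1+K)x}` because `f x ≤ 1 + K x ≤ e^{K x}` (and `f = 0` on the negative half-line).
Independence makes the density of the vector `(Z i)` with respect to that of `(Y i)` the product
of these, hence at most `e^{(1+K) ∑ x i} ≤ e^{(1+K) u}` on `{∑ x i ≤ u}`.
-/

open MeasureTheory ProbabilityTheory
open scoped ENNReal

namespace MeasureTheory.Measure

variable {ι : Type*} [Fintype ι] {α : ι → Type*} [∀ i, MeasurableSpace (α i)]

theorem pi_withDensity_of_isProbabilityMeasure (μ : ∀ i, Measure (α i))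
    [∀ i, IsProbabilityMeasure (μ i)] (g : ∀ i, α i → ℝ≥0∞) (hg : ∀ i, Measurable (g i))
    [∀ i, SigmaFinite ((μ i).withDensity (g i))] :
    Measure.pi (fun i ↦ (μ i).withDensity (g i)) =
      (Measure.pi μ).withDensity (fun x ↦ ∏ i, g i (x i)) := by
  refine pi_eq fun s hs ↦ ?_
  have hs_pi : MeasurableSet (Set.univ.pi s) := .univ_pi hs
  have h_indicator : (Set.univ.pi s).indicator (fun x ↦ ∏ i, g i (x i)) =
      fun x ↦ ∏ i, (s i).indicator (g i) (x i) := by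
    ext x
    by_cases hx : x ∈ Set.univ.pi s
    · rw [Set.indicator_of_mem hx]
      exact Finset.prod_congr rfl fun i _ ↦ (Set.indicator_of_mem (hx i trivial) _).symm
    · obtain ⟨j, hj⟩ : ∃ j, x j ∉ s j := by simpa using hx
      rw [Set.indicator_of_notMem hx]
      exact (Finset.prod_eq_zero (Finset.mem_univ j) (Set.indicator_of_notMem hj _)).symm
  have h_indep : iIndepFun (fun i (x : ∀ i, α i) ↦ (s i).indicator (g i) (x i)) (Measure.pi μ) :=
    iIndepFun_pi fun i ↦ ((hg i).indicator (hs i)).aemeasurable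
  rw [withDensity_apply _ hs_pi, ← lintegral_indicator hs_pi, h_indicator,
    lintegral_prod_eq_prod_lintegral_of_indepFun Finset.univ _ h_indep
      fun i ↦ ((hg i).indicator (hs i)).comp (measurable_pi_apply i)]
  refine Finset.prod_congr rfl fun i _ ↦ ?_
  rw [(measurePreserving_eval μ i).lintegral_comp ((hg i).indicator (hs i)),
    lintegral_indicator (hs i), withDensity_apply _ (hs i)]

end MeasureTheory.Measure

section

variable {Ω : Type*} [MeasurableSpace Ω] {P : Measure Ω} {ι : Type*} [Fintype ι]
  {α : ι → Type*} [∀ i, MeasurableSpace (α i)]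

theorem measure_preimage_le_of_iIndepFun_map_eq_withDensity (X Y : ∀ i, Ω → α i)
    (hX : ∀ i, AEMeasurable (X i) P) (hY : ∀ i, AEMeasurable (Y i) P)
    (hX_indep : iIndepFun X P) (hY_indep : iIndepFun Y P)
    (r : ∀ i, α i → ℝ≥0∞) (hr : ∀ i, Measurable (r i))
    (h_law : ∀ i, P.map (X i) = (P.map (Y i)).withDensity (r i))
    {A : Set (∀ i, α i)} (hA : MeasurableSet A) {C : ℝ≥0∞}
    (hC : ∀ x ∈ A, ∏ i, r i (x i) ≤ C) :
    P {ω | (fun i ↦ X i ω) ∈ A} ≤ C * P {ω | (fun i ↦ Y i ω) ∈ A} := by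
  have := hX_indep.isProbabilityMeasure
  have : ∀ i, IsProbabilityMeasure (P.map (Y i)) :=
    fun i ↦ Measure.isProbabilityMeasure_map (hY i)
  have : ∀ i, SigmaFinite ((P.map (Y i)).withDensity (r i)) := fun i ↦ by
    rw [← h_law i]
    have := Measure.isProbabilityMeasure_map (μ := P) (hX i)
    infer_instance
  have h_joint (W : ∀ i, Ω → α i) (hW : ∀ i, AEMeasurable (W i) P) (hW_indep : iIndepFun W P) :
      P {ω | (fun i ↦ W i ω) ∈ A} = Measure.pi (fun i ↦ P.map (W i)) A := by
    rw [← hW_indep.map_fun_eq_pi_map hW,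
      Measure.map_apply_of_aemeasurable (aemeasurable_pi_lambda _ hW) hA]
    rfl
  calc P {ω | (fun i ↦ X i ω) ∈ A}
      = ∫⁻ x in A, ∏ i, r i (x i) ∂Measure.pi (fun i ↦ P.map (Y i)) := by
        rw [h_joint X hX hX_indep, funext h_law,
          Measure.pi_withDensity_of_isProbabilityMeasure _ _ hr, withDensity_apply _ hA]
    _ ≤ ∫⁻ _ in A, C ∂Measure.pi (fun i ↦ P.map (Y i)) := setLIntegral_mono measurable_const hC
    _ = C * P {ω | (fun i ↦ Y i ω) ∈ A} := by
        rw [setLIntegral_const, h_joint Y hY hY_indep]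

end

theorem expMeasure_one_withDensity_mul_exp {f : ℝ → ℝ} (hf : Measurable f)
    (hf_supp : ∀ x : ℝ, x < 0 → f x = 0) :
    (expMeasure 1).withDensity (fun x ↦ ENNReal.ofReal (f x * Real.exp x)) =
      volume.withDensity (fun x ↦ ENNReal.ofReal (f x)) := by
  rw [show expMeasure 1 = volume.withDensity (exponentialPDF 1) from rfl,
    ← withDensity_mul (f := exponentialPDF 1) (g := fun x ↦ ENNReal.ofReal (f x * Real.exp x)) _
      (measurable_exponentialPDFReal 1).ennreal_ofReal (hf.mul Real.measurable_exp).ennreal_ofReal]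
  congr 1
  ext x
  rcases lt_or_ge x 0 with hx | hx
  · simp [exponentialPDF_of_neg hx, hf_supp x hx]
  · rw [Pi.mul_apply, exponentialPDF_of_nonneg hx, ← ENNReal.ofReal_mul (by positivity)]
    congr 1
    rw [one_mul, one_mul, Real.exp_neg]
    field_simp

theorem mul_exp_le_exp_of_abs_sub_one_le {f : ℝ → ℝ} {K : ℝ}
    (hf_lip : ∀ x : ℝ, 0 ≤ x → |f x - 1| ≤ K * x) (hf_supp : ∀ x : ℝ, x < 0 → f x = 0)
    (x : ℝ) : f x * Real.exp x ≤ Real.exp ((1 + K) * x) := by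
  rcases lt_or_ge x 0 with hx | hx
  · rw [hf_supp x hx, zero_mul]
    positivity
  · have hfx : f x ≤ Real.exp (K * x) := by
      linarith [(abs_le.mp (hf_lip x hx)).2, Real.add_one_le_exp (K * x)]
    calc f x * Real.exp x ≤ Real.exp (K * x) * Real.exp x := by gcongr
      _ = Real.exp ((1 + K) * x) := by rw [← Real.exp_add]; ring_nf

theorem prod_ofReal_exp_le_of_sum_le {ι : Type*} [Fintype ι] {c u : ℝ} (hc : 0 ≤ c)
    {x : ι → ℝ} (hx : ∑ i, x i ≤ u) :
    ∏ i, ENNReal.ofReal (Real.exp (c * x i)) ≤ ENNReal.ofReal (Real.exp (c * u)) := by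
  rw [← ENNReal.ofReal_prod_of_nonneg fun i _ ↦ (Real.exp_pos _).le, ← Real.exp_sum,
    ← Finset.mul_sum]
  gcongr

theorem lipschitz_density_comparison_general
    {Ω : Type*} [MeasureSpace Ω]
    (K : ℝ) (hK : 0 < K) (f : ℝ → ℝ) (hf_meas : Measurable f)
    (hf_lip : ∀ x : ℝ, 0 ≤ x → |f x - 1| ≤ K * x)
    (hf_supp : ∀ x : ℝ, x < 0 → f x = 0)
    (n : ℕ) (Z Y : Fin n → Ω → ℝ)
    (hZmeas : ∀ i, Measurable (Z i)) (hYmeas : ∀ i, Measurable (Y i))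
    (hZindep : iIndepFun Z ℙ)
    (hYindep : iIndepFun Y ℙ)
    (hZdist : ∀ i, Measure.map (Z i) ℙ =
      volume.withDensity (fun x => ENNReal.ofReal (f x)))
    (hYdist : ∀ i, Measure.map (Y i) ℙ = expMeasure 1)
    (u : ℝ) :
    ℙ {ω | ∑ i, Z i ω ≤ u} ≤
      ENNReal.ofReal (Real.exp ((1 + K) * u)) * ℙ {ω | ∑ i, Y i ω ≤ u} := by
  have h_law (i : Fin n) : Measure.map (Z i) ℙ = (Measure.map (Y i) ℙ).withDensity
      (fun x ↦ ENNReal.ofReal (f x * Real.exp x)) := by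
    rw [hZdist, hYdist, expMeasure_one_withDensity_mul_exp hf_meas hf_supp]
  refine measure_preimage_le_of_iIndepFun_map_eq_withDensity Z Y (fun i ↦ (hZmeas i).aemeasurable)
    (fun i ↦ (hYmeas i).aemeasurable) hZindep hYindep
    _ (fun _ ↦ (hf_meas.mul Real.measurable_exp).ennreal_ofReal) h_law
    (measurableSet_le (Finset.measurable_sum _ fun i _ ↦ measurable_pi_apply i) measurable_const)
    fun x hx ↦ ?_
  calc ∏ i, ENNReal.ofReal (f (x i) * Real.exp (x i))
      ≤ ∏ i, ENNReal.ofReal (Real.exp ((1 + K) * x i)) := by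
        gcongr with i
        exact mul_exp_le_exp_of_abs_sub_one_le hf_lip hf_supp (x i)
    _ ≤ ENNReal.ofReal (Real.exp ((1 + K) * u)) := prod_ofReal_exp_le_of_sum_le (by linarith) hx

theorem lipschitz_density_comparison
    {Ω : Type*} [MeasureSpace Ω] [IsProbabilityMeasure (ℙ : Measure Ω)]
    (K : ℝ) (hK : 0 < K) (f : ℝ → ℝ) (hf_meas : Measurable f)
    (hf0 : f 0 = 1) (hf_lip : ∀ x : ℝ, 0 ≤ x → |f x - 1| ≤ K * x)
    (hf_nonneg : ∀ x, 0 ≤ f x) (hf_supp : ∀ x : ℝ, x < 0 → f x = 0)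
    (n : ℕ) (hn : 1 ≤ n) (Z Y : Fin n → Ω → ℝ)
    (hZmeas : ∀ i, Measurable (Z i)) (hYmeas : ∀ i, Measurable (Y i))
    (hZindep : iIndepFun Z ℙ)
    (hYindep : iIndepFun Y ℙ)
    (hZdist : ∀ i, Measure.map (Z i) ℙ =
      volume.withDensity (fun x => ENNReal.ofReal (f x)))
    (hYdist : ∀ i, Measure.map (Y i) ℙ = expMeasure 1)
    (u : ℝ) (hu0 : 0 < u) (hu1 : u ≤ 1) :
    ℙ {ω | ∑ i, Z i ω ≤ u} ≤
      ENNReal.ofReal (Real.exp ((1 + K) * u)) * ℙ {ω | ∑ i, Y i ω ≤ u} :=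
  lipschitz_density_comparison_general K hK f hf_meas hf_lip hf_supp n Z Y hZmeas hYmeas hZindep
    hYindep hZdist hYdist u
end

section
/- Let S_n be the sum of n i.i.d. mean-1 exponentials Y_1,…,Y_n. For fixed u ∈ (0,1] and δ ∈ (0,u), P(max_i Y_i ≥ δ | S_n ≤ u) ≤ 3 e^{δ} ((u−δ)/u)^{n−1} n²/u for n ≥ 2, and hence P(max_i Y_i < δ | S_n ≤ u) → 1 as n → ∞. -/
/-!
Let `S` be the event `∑ xᵢ ≤ u` under the product of `n` exponential laws. Conditioning on the
first coordinate gives `P(Sₙ₊₁ ≤ t) = ∫ P(Sₙ ≤ t - y) dExp(y)`, and since the exponential density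
lies between `e^{-t}` and `1` on `[0, t]`, induction squeezes `P(Sₙ ≤ t)` between `e^{-t} tⁿ / n!`
and `tⁿ / n!`. If some coordinate is at least `δ`, the other `n - 1` sum to at most `u - δ`, so a
union bound gives `P(S, max xᵢ ≥ δ) ≤ n (u - δ)ⁿ⁻¹ / (n - 1)!`. Dividing by `P(S)` leaves
`eᵘ n² ((u - δ) / u)ⁿ⁻¹ / u`, and `eᵘ ≤ e < 3 ≤ 3 e^δ`; the bound tends to `0` geometrically.
-/

open MeasureTheory ProbabilityTheory Filter Set
open scoped ENNReal Topology Nat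

lemma map_cond_preimage {Ω E : Type*} [MeasurableSpace Ω] [MeasurableSpace E] {μ : Measure Ω}
    {X : Ω → E} (hX : Measurable X) {s : Set E} (hs : MeasurableSet s) :
    (μ[|X ⁻¹' s]).map X = (μ.map X)[|s] := by
  rw [ProbabilityTheory.cond, ProbabilityTheory.cond, Measure.map_smul,
    ← Measure.restrict_map hX hs, Measure.map_apply hX hs]

noncomputable def sumCDF (μ : Measure ℝ) (n : ℕ) (t : ℝ) : ℝ≥0∞ :=
  Measure.pi (fun _ : Fin n => μ) {x | ∑ i, x i ≤ t}

lemma measurableSet_sum_le (n : ℕ) (t : ℝ) : MeasurableSet {x : Fin n → ℝ | ∑ i, x i ≤ t} :=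
  measurableSet_le (by fun_prop) measurable_const

section SumCDF

variable {μ : Measure ℝ}

lemma measure_pi_succAbove [SigmaFinite μ] {n : ℕ} (i : Fin (n + 1))
    {s : Set (ℝ × (Fin n → ℝ))} (hs : MeasurableSet s) :
    Measure.pi (fun _ => μ) {x | (x i, fun k => x (i.succAbove k)) ∈ s} =
      μ.prod (Measure.pi fun _ => μ) s :=
  (measurePreserving_piFinSuccAbove (fun _ => μ) i).measure_preimage hs.nullMeasurableSet

lemma sumCDF_succ [SigmaFinite μ] (n : ℕ) (t : ℝ) :
    sumCDF μ (n + 1) t = ∫⁻ y, sumCDF μ n (t - y) ∂μ := by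
  have hs : {x : Fin (n + 1) → ℝ | ∑ i, x i ≤ t} = {x | (x 0, fun k => x (Fin.succAbove 0 k)) ∈
      {p : ℝ × (Fin n → ℝ) | ∑ k, p.2 k ≤ t - p.1}} := by
    ext x
    simp only [mem_ofPred_eq, Fin.sum_univ_succAbove x 0, le_sub_iff_add_le']
  rw [sumCDF, hs, measure_pi_succAbove 0 (measurableSet_le (by fun_prop) (by fun_prop)),
    Measure.prod_apply (measurableSet_le (by fun_prop) (by fun_prop))]
  rfl

lemma sumCDF_eq_zero_of_neg [SigmaFinite μ] (hμ : ∀ᵐ y ∂μ, 0 ≤ y) (n : ℕ) {t : ℝ} (ht : t < 0) :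
    sumCDF μ n t = 0 := by
  induction n generalizing t with
  | zero => simp [sumCDF, ht.not_ge]
  | succ n ih =>
    rw [sumCDF_succ, ← lintegral_zero]
    refine lintegral_congr_ae ?_
    filter_upwards [hμ] with y hy
    exact ih (by linarith)

lemma measure_pi_sum_succAbove_le [IsProbabilityMeasure μ] {n : ℕ} (i : Fin (n + 1)) (t : ℝ) :
    Measure.pi (fun _ => μ) {x : Fin (n + 1) → ℝ | ∑ k, x (i.succAbove k) ≤ t} =
      sumCDF μ n t := by
  have hs := measure_pi_succAbove (μ := μ) i (MeasurableSet.univ.prod (measurableSet_sum_le n t))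
  simpa [sumCDF] using hs

lemma measure_pi_sum_le_inter_exists_ge_le [IsProbabilityMeasure μ] (n : ℕ) (u δ : ℝ) :
    Measure.pi (fun _ => μ) {x : Fin (n + 1) → ℝ | ∑ i, x i ≤ u ∧ ∃ i, δ ≤ x i} ≤
      (n + 1) * sumCDF μ n (u - δ) :=
  calc _ ≤ Measure.pi (fun _ => μ)
        (⋃ i : Fin (n + 1), {x : Fin (n + 1) → ℝ | ∑ k, x (i.succAbove k) ≤ u - δ}) := by
        refine measure_mono fun x ⟨hsum, i, hi⟩ => mem_iUnion.2 ⟨i, ?_⟩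
        have := Fin.sum_univ_succAbove x i
        simp only [mem_ofPred_eq]
        linarith
    _ ≤ ∑ i : Fin (n + 1), Measure.pi (fun _ => μ) {x | ∑ k, x (i.succAbove k) ≤ u - δ} :=
        measure_iUnion_fintype_le _ _
    _ = (n + 1) * sumCDF μ n (u - δ) := by simp [measure_pi_sum_succAbove_le]

end SumCDF

instance isProbabilityMeasure_expMeasure_one : IsProbabilityMeasure (expMeasure 1) :=
  isProbabilityMeasure_expMeasure one_pos

lemma ae_expMeasure_nonneg : ∀ᵐ y ∂expMeasure 1, 0 ≤ y := by
  rw [ae_iff]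
  simp only [not_le]
  change expMeasure 1 (Iio 0) = 0
  rw [expMeasure, gammaMeasure, withDensity_apply _ measurableSet_Iio]
  exact lintegral_exponentialPDF_of_nonpos le_rfl

lemma lintegral_expMeasure_one (f : ℝ → ℝ≥0∞) :
    ∫⁻ y, f y ∂expMeasure 1 = ∫⁻ y, exponentialPDF 1 y * f y :=
  lintegral_withDensity_eq_lintegral_mul_non_measurable _
    (measurable_exponentialPDFReal 1).ennreal_ofReal (ae_of_all _ fun _ => ENNReal.ofReal_lt_top) f

lemma lintegral_Icc_sub_pow_div_factorial (n : ℕ) {t : ℝ} (ht : 0 ≤ t) :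
    ∫⁻ y in Icc 0 t, ENNReal.ofReal ((t - y) ^ n / n !) =
      ENNReal.ofReal (t ^ (n + 1) / (n + 1)!) := by
  rw [← ofReal_integral_eq_lintegral_ofReal]
  · rw [integral_Icc_eq_integral_Ioc, ← intervalIntegral.integral_of_le ht,
      intervalIntegral.integral_div, intervalIntegral.integral_comp_sub_left (fun x => x ^ n) t]
    simp [integral_pow, Nat.factorial_succ]
    field_simp
  · exact (ContinuousOn.integrableOn_compact isCompact_Icc (by fun_prop))
  · filter_upwards [ae_restrict_mem measurableSet_Icc] with y hy
    have : 0 ≤ t - y := sub_nonneg.2 hy.2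
    positivity

lemma sumCDF_expMeasure_le (n : ℕ) {t : ℝ} (ht : 0 ≤ t) :
    sumCDF (expMeasure 1) n t ≤ ENNReal.ofReal (t ^ n / n !) := by
  induction n generalizing t with
  | zero => simp [sumCDF, ht]
  | succ n ih =>
    rw [sumCDF_succ, lintegral_expMeasure_one, ← lintegral_Icc_sub_pow_div_factorial n ht,
      ← lintegral_indicator measurableSet_Icc]
    refine lintegral_mono fun y => ?_
    rcases lt_or_ge y 0 with hy0 | hy0
    · simp [exponentialPDF_of_neg hy0]
    rcases lt_or_ge t y with hty | hyt
    · simp [sumCDF_eq_zero_of_neg ae_expMeasure_nonneg n (sub_neg.2 hty)]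
    have hpdf : exponentialPDF 1 y ≤ 1 := by
      simpa [exponentialPDF_of_nonneg hy0] using hy0
    rw [indicator_of_mem (show y ∈ Icc 0 t from ⟨hy0, hyt⟩), ← one_mul (ENNReal.ofReal _)]
    exact mul_le_mul' hpdf (ih (sub_nonneg.2 hyt))

lemma le_sumCDF_expMeasure (n : ℕ) {t : ℝ} (ht : 0 ≤ t) :
    ENNReal.ofReal (Real.exp (-t) * (t ^ n / n !)) ≤ sumCDF (expMeasure 1) n t := by
  induction n generalizing t with
  | zero => simp [sumCDF, ht]
  | succ n ih =>
    rw [sumCDF_succ, lintegral_expMeasure_one, ENNReal.ofReal_mul (Real.exp_pos _).le,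
      ← lintegral_Icc_sub_pow_div_factorial n ht, ← lintegral_const_mul' _ _ ENNReal.ofReal_ne_top,
      ← lintegral_indicator measurableSet_Icc]
    refine lintegral_mono fun y => ?_
    by_cases hy : y ∈ Icc 0 t
    · have hexp : Real.exp (-t) = Real.exp (-y) * Real.exp (-(t - y)) := by
        rw [← Real.exp_add]; ring_nf
      rw [indicator_of_mem hy, exponentialPDF_of_nonneg hy.1, hexp,
        ENNReal.ofReal_mul (Real.exp_pos _).le, mul_assoc, ← ENNReal.ofReal_mul (Real.exp_pos _).le]
      simp only [one_mul]
      exact mul_le_mul' le_rfl (ih (sub_nonneg.2 hy.2))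
    · simp [indicator_of_notMem hy]

noncomputable def expCondSumLE (u : ℝ) (n : ℕ) : Measure (Fin n → ℝ) :=
  (Measure.pi fun _ : Fin n => expMeasure 1)[|{x | ∑ i, x i ≤ u}]

lemma expCondSumLE_exists_ge_le {u δ : ℝ} (hu0 : 0 < u) (hu1 : u ≤ 1) (hδ0 : 0 < δ) (hδu : δ < u)
    {n : ℕ} (hn : 0 < n) :
    expCondSumLE u n {x | ∃ i, δ ≤ x i} ≤
      ENNReal.ofReal (3 * Real.exp δ * ((u - δ) / u) ^ (n - 1) * n ^ 2 / u) := by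
  obtain ⟨m, rfl⟩ : ∃ m, n = m + 1 := ⟨n - 1, by omega⟩
  set α := ((m : ℝ) + 1) * ((u - δ) ^ m / m !)
  set β := Real.exp (-u) * (u ^ (m + 1) / (m + 1)!)
  have hjoint : Measure.pi (fun _ => expMeasure 1)
      ({x : Fin (m + 1) → ℝ | ∑ i, x i ≤ u} ∩ {x | ∃ i, δ ≤ x i}) ≤ ENNReal.ofReal α := by
    refine (measure_pi_sum_le_inter_exists_ge_le m u δ).trans ?_
    rw [ENNReal.ofReal_mul (by positivity), ENNReal.ofReal_add (by positivity) zero_le_one,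
      ENNReal.ofReal_natCast, ENNReal.ofReal_one]
    gcongr
    exact sumCDF_expMeasure_le m (by linarith)
  have hratio : α / β ≤ 3 * Real.exp δ * ((u - δ) / u) ^ m * (m + 1) ^ 2 / u := by
    have hexp : Real.exp u ≤ 3 * Real.exp δ :=
      calc Real.exp u ≤ Real.exp 1 := Real.exp_le_exp.2 hu1
        _ ≤ 3 := Real.exp_one_lt_d9.le.trans (by norm_num)
        _ ≤ 3 * Real.exp δ := le_mul_of_one_le_right (by norm_num) (Real.one_le_exp hδ0.le)
    have hα : α / β = Real.exp u * ((u - δ) / u) ^ m * (m + 1) ^ 2 / u := by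
      simp only [α, β, Nat.factorial_succ, Real.exp_neg, div_pow]
      push_cast
      field_simp
      ring
    rw [hα]
    gcongr
  rw [expCondSumLE, cond_apply (measurableSet_sum_le _ _), mul_comm, ← div_eq_mul_inv]
  calc _ ≤ ENNReal.ofReal α / ENNReal.ofReal β :=
        ENNReal.div_le_div hjoint (le_sumCDF_expMeasure (m + 1) hu0.le)
    _ = ENNReal.ofReal (α / β) := (ENNReal.ofReal_div_of_pos (by positivity)).symm
    _ ≤ _ := ENNReal.ofReal_le_ofReal (by simpa using hratio)

lemma tendsto_pow_sub_one_mul_sq {r : ℝ} (hr0 : 0 < r) (hr1 : r < 1) :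
    Tendsto (fun n : ℕ => r ^ (n - 1) * (n : ℝ) ^ 2) atTop (𝓝 0) := by
  have := (tendsto_pow_const_mul_const_pow_of_lt_one 2 hr0.le hr1).const_mul r⁻¹
  rw [mul_zero] at this
  refine this.congr' ?_
  filter_upwards [eventually_gt_atTop 0] with n hn
  obtain ⟨k, rfl⟩ : ∃ k, n = k + 1 := ⟨n - 1, by omega⟩
  simp only [Nat.add_sub_cancel, pow_succ]
  field_simp

lemma tendsto_expCondSumLE_forall_lt {u δ : ℝ} (hu0 : 0 < u) (hu1 : u ≤ 1) (hδ0 : 0 < δ)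
    (hδu : δ < u) :
    Tendsto (fun n => expCondSumLE u n {x | ∀ i, x i < δ}) atTop (𝓝 1) := by
  have hbound : Tendsto (fun n : ℕ =>
      ENNReal.ofReal (3 * Real.exp δ * ((u - δ) / u) ^ (n - 1) * n ^ 2 / u)) atTop (𝓝 0) := by
    rw [← ENNReal.ofReal_zero]
    refine ENNReal.tendsto_ofReal ?_
    have := ((tendsto_pow_sub_one_mul_sq (div_pos (sub_pos.2 hδu) hu0)
      ((div_lt_one hu0).2 (by linarith))).const_mul (3 * Real.exp δ)).div_const u
    simpa [mul_assoc] using this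
  have hexists : Tendsto (fun n => expCondSumLE u n {x | ∃ i, δ ≤ x i}) atTop (𝓝 0) :=
    tendsto_of_tendsto_of_tendsto_of_le_of_le' tendsto_const_nhds hbound
      (Eventually.of_forall fun _ => zero_le)
      ((eventually_gt_atTop 0).mono fun _ hn => expCondSumLE_exists_ge_le hu0 hu1 hδ0 hδu hn)
  have hcompl : ∀ n,
      expCondSumLE u n {x | ∀ i, x i < δ} = 1 - expCondSumLE u n {x | ∃ i, δ ≤ x i} := by
    intro n
    have : IsProbabilityMeasure (expCondSumLE u n) :=
      cond_isProbabilityMeasure ((ENNReal.ofReal_pos.2 (by positivity)).trans_le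
        (le_sumCDF_expMeasure n hu0.le)).ne'
    rw [← prob_compl_eq_one_sub (by measurability)]
    congr 1
    ext x
    simp
  simpa [hcompl] using ENNReal.Tendsto.sub tendsto_const_nhds hexists (Or.inl ENNReal.one_ne_top)

theorem max_small_given_sum_small
    {Ω : Type*} [MeasureSpace Ω] [IsProbabilityMeasure (ℙ : Measure Ω)]
    (Y : (n : ℕ) → Fin n → Ω → ℝ)
    (hmeas : ∀ n i, Measurable (Y n i))
    (hindep : ∀ n, iIndepFun (Y n) ℙ)
    (hdist : ∀ n i, Measure.map (Y n i) ℙ = expMeasure 1)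
    (u δ : ℝ) (hu0 : 0 < u) (hu1 : u ≤ 1) (hδ0 : 0 < δ) (hδu : δ < u) :
    (∀ n : ℕ, 2 ≤ n →
      (ℙ[|{ω | ∑ i, Y n i ω ≤ u}]) {ω | ∃ i, δ ≤ Y n i ω} ≤
        ENNReal.ofReal (3 * Real.exp δ * ((u - δ) / u) ^ (n - 1) * n ^ 2 / u)) ∧
    Tendsto (fun n : ℕ => (ℙ[|{ω | ∑ i, Y n i ω ≤ u}]) {ω | ∀ i, Y n i ω < δ})
      atTop (nhds 1) := by
  have hX : ∀ n, Measurable fun ω (i : Fin n) => Y n i ω :=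
    fun n => measurable_pi_lambda _ (hmeas n)
  have hlaw : ∀ n, (ℙ : Measure Ω).map (fun ω (i : Fin n) => Y n i ω) =
      Measure.pi fun _ => expMeasure 1 := fun n => by
    rw [(hindep n).map_fun_eq_pi_map fun i => (hmeas n i).aemeasurable]
    simp only [hdist]
  have hcond : ∀ n (t : Set (Fin n → ℝ)), MeasurableSet t →
      (ℙ[|(fun ω i => Y n i ω) ⁻¹' {x | ∑ i, x i ≤ u}]) ((fun ω i => Y n i ω) ⁻¹' t) =
        expCondSumLE u n t := fun n t ht => by
    rw [← Measure.map_apply (hX n) ht, map_cond_preimage (hX n) (measurableSet_sum_le n u), hlaw,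
      expCondSumLE]
  refine ⟨fun n hn => (hcond n _ (by measurability)).trans_le
    (expCondSumLE_exists_ge_le hu0 hu1 hδ0 hδu (by omega)), ?_⟩
  exact (tendsto_expCondSumLE_forall_lt hu0 hu1 hδ0 hδu).congr fun n =>
    (hcond n _ (by measurability)).symm
end
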